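/- Let 0 < σ < 1 and g = (a_{ij}) ∈ SL(2,ℝ). For every continuous compactly supported function f : ℝ → ℂ, the function (T^σ(g)f)(x) = |a_{12}x + a_{22}|^{-1-σ} f((a_{11}x + a_{21})/(a_{12}x + a_{22})) (defined for x with a_{12}x + a_{22} ≠ 0) satisfies B(T^σ(g)f, T^σ(g)f) = B(f,f), where B(f₁,f₂) = ∬_{ℝ×ℝ} f₁(x) · conj(f₂(y)) · |x − y|^{-(1-σ)} dx dy. -/

import Mathlib

/-! The substitution `x ↦ (a₁₁x + a₂₁)/(a₁₂x + a₂₂)` has derivative `(a₁₂x + a₂₂)⁻²` and sends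
`x - y` to `(x - y)/((a₁₂x + a₂₂)(a₁₂y + a₂₂))`. Substituting it in both variables of `B(f, f)`,
the Jacobian times the transformed kernel `|x - y|^{σ-1}` splits off exactly the two factors
`|a₁₂x + a₂₂|^{-1-σ}` of `T^σ(g)`. The points where the substitution is undefined, and the points
outside its image, are null sets. -/

open MeasureTheory Complex

noncomputable section

/-- The complementary series pairing
`B(f₁,f₂) = ∬_{ℝ×ℝ} f₁(x) conj(f₂(y)) |x−y|^{-(1-σ)} dx dy`. -/
def complementaryFormR (σ : ℝ) (f₁ f₂ : ℝ → ℂ) : ℂ :=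
  ∫ p : ℝ × ℝ, f₁ p.1 * (starRingEnd ℂ) (f₂ p.2) *
    (((|p.1 - p.2| : ℝ) ^ (-(1 - σ)) : ℝ) : ℂ)

/-- The complementary series operator `T^σ(g)` of `SL(2,ℝ)`. -/
def complementarySeriesR (σ : ℝ) (g : Matrix.SpecialLinearGroup (Fin 2) ℝ)
    (f : ℝ → ℂ) : ℝ → ℂ := fun x =>
  (((|g.1 0 1 * x + g.1 1 1| : ℝ) ^ (-1 - σ) : ℝ) : ℂ) *
    f ((g.1 0 0 * x + g.1 1 0) / (g.1 0 1 * x + g.1 1 1))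

open Set

theorem integral_image_prod_image_eq_integral_abs_deriv_mul_smul {E : Type*}
    [NormedAddCommGroup E] [NormedSpace ℝ E] {s : Set ℝ} {φ φ' : ℝ → ℝ}
    (hs : MeasurableSet s) (hφ : ∀ x ∈ s, HasDerivWithinAt φ (φ' x) s x) (hinj : InjOn φ s)
    (H : ℝ × ℝ → E) :
    ∫ p in (φ '' s) ×ˢ (φ '' s), H p =
      ∫ p in s ×ˢ s, |φ' p.1 * φ' p.2| • H (φ p.1, φ p.2) := by
  have hΦ : ∀ p ∈ s ×ˢ s, HasFDerivWithinAt (Prod.map φ φ)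
      ((ContinuousLinearMap.toSpanSingleton ℝ (φ' p.1)).prodMap
        (ContinuousLinearMap.toSpanSingleton ℝ (φ' p.2))) (s ×ˢ s) p := fun p hp =>
    HasFDerivWithinAt.prodMap p
      (hasDerivWithinAt_iff_hasFDerivWithinAt.mp ((hφ _ hp.1).mono (fst_image_prod_subset _ _)))
      (hasDerivWithinAt_iff_hasFDerivWithinAt.mp ((hφ _ hp.2).mono (snd_image_prod_subset _ _)))
  rw [← prodMap_image_prod, integral_image_eq_integral_abs_det_fderiv_smul volume
    (hs.prod hs) hΦ (hinj.prodMap hinj)]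
  simp [ContinuousLinearMap.det, LinearMap.det_prodMap, Prod.map]

theorem setIntegral_prod_eq_integral_of_ae_mem {α β E : Type*}
    [MeasurableSpace α] [MeasurableSpace β] [NormedAddCommGroup E] [NormedSpace ℝ E]
    {μ : Measure α} {ν : Measure β} [SFinite ν] {A : Set α} {B : Set β}
    (hA : ∀ᵐ x ∂μ, x ∈ A) (hB : ∀ᵐ y ∂ν, y ∈ B) (H : α × β → E) :
    ∫ p in A ×ˢ B, H p ∂μ.prod ν = ∫ p, H p ∂μ.prod ν := by
  rw [Measure.restrict_eq_self_of_ae_mem]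
  filter_upwards [Measure.quasiMeasurePreserving_fst.ae hA,
    Measure.quasiMeasurePreserving_snd.ae hB] with p h1 h2
  exact ⟨h1, h2⟩

theorem ae_mul_add_ne_zero {μ : Measure ℝ} [NullSingletonClass μ] {a b : ℝ} (h : a ≠ 0 ∨ b ≠ 0) :
    ∀ᵐ x ∂μ, a * x + b ≠ 0 := by
  refine ae_iff.mpr (Set.Subsingleton.measure_zero ?_ _)
  intro x (hx : ¬a * x + b ≠ 0) y (hy : ¬a * y + b ≠ 0)
  rw [not_not] at hx hy
  have ha : a ≠ 0 := fun ha => h.elim (· ha) fun hb => hb (by simpa [ha] using hx)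
  have : a * (x - y) = 0 := by linear_combination hx - hy
  exact sub_eq_zero.mp ((mul_eq_zero.mp this).resolve_left ha)

theorem abs_div_rpow_neg (a b r : ℝ) : |a / b| ^ (-r) = |b| ^ r * |a| ^ (-r) := by
  rw [abs_div, Real.div_rpow (abs_nonneg a) (abs_nonneg b), Real.rpow_neg (abs_nonneg b),
    div_inv_eq_mul, mul_comm]

theorem abs_inv_sq_mul_rpow {u : ℝ} (hu : u ≠ 0) (σ : ℝ) :
    |(u ^ 2)⁻¹| * |u| ^ (1 - σ) = |u| ^ (-1 - σ) := by
  rw [abs_inv, abs_pow, ← Real.rpow_natCast, ← Real.rpow_neg (abs_nonneg u),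
    ← Real.rpow_add (abs_pos.2 hu)]
  ring_nf

namespace Matrix.SpecialLinearGroup

variable (g : SpecialLinearGroup (Fin 2) ℝ)

/- `mobius g` is the linear fractional map of the transpose `gᵀ`, as in `complementarySeriesR`,
not the usual action `x ↦ (g₀₀x + g₀₁)/(g₁₀x + g₁₁)` of `g`. -/
def mobiusDenom (x : ℝ) : ℝ := g 0 1 * x + g 1 1

def mobius (x : ℝ) : ℝ := (g 0 0 * x + g 1 0) / g.mobiusDenom x

theorem det_fin_two_eq_one : g 0 0 * g 1 1 - g 0 1 * g 1 0 = 1 := by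
  rw [← Matrix.det_fin_two, g.det_coe]

theorem continuous_mobiusDenom : Continuous g.mobiusDenom := by
  unfold mobiusDenom
  fun_prop

theorem mobius_sub_mobius {x y : ℝ} (hx : g.mobiusDenom x ≠ 0) (hy : g.mobiusDenom y ≠ 0) :
    g.mobius x - g.mobius y = (x - y) / (g.mobiusDenom x * g.mobiusDenom y) := by
  rw [mobius, mobius, div_sub_div _ _ hx hy]
  congr 1
  simp only [mobiusDenom]
  linear_combination (x - y) * g.det_fin_two_eq_one

theorem injOn_mobius : InjOn g.mobius {x | g.mobiusDenom x ≠ 0} := fun x hx y hy hxy => by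
  have h := g.mobius_sub_mobius hx hy
  rw [hxy, sub_self, eq_comm, div_eq_zero_iff] at h
  exact sub_eq_zero.mp (h.resolve_right (mul_ne_zero hx hy))

theorem hasDerivAt_mobius {x : ℝ} (hx : g.mobiusDenom x ≠ 0) :
    HasDerivAt g.mobius ((g.mobiusDenom x ^ 2)⁻¹) x := by
  have hnum : HasDerivAt (fun x => g 0 0 * x + g 1 0) (g 0 0) x := by
    simpa using ((hasDerivAt_id x).const_mul (g 0 0)).add_const (g 1 0)
  have hden : HasDerivAt (fun x => g 0 1 * x + g 1 1) (g 0 1) x := by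
    simpa using ((hasDerivAt_id x).const_mul (g 0 1)).add_const (g 1 1)
  refine (hnum.div hden hx).congr_deriv ?_
  rw [← one_div]
  congr 1
  linear_combination g.det_fin_two_eq_one

theorem ae_mobiusDenom_ne_zero : ∀ᵐ x : ℝ, g.mobiusDenom x ≠ 0 :=
  ae_mul_add_ne_zero (not_and_or.mp fun h => by simpa [h.1, h.2] using g.det_fin_two_eq_one)

theorem mem_image_mobius {y : ℝ} (hy : g 0 1 * y - g 0 0 ≠ 0) :
    y ∈ g.mobius '' {x | g.mobiusDenom x ≠ 0} := by
  have hdet := g.det_fin_two_eq_one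
  -- the preimage is `mobius g⁻¹ y`
  have hden : g.mobiusDenom ((g 1 0 - g 1 1 * y) / (g 0 1 * y - g 0 0))
      = -(g 0 1 * y - g 0 0)⁻¹ := by
    simp only [mobiusDenom]
    field_simp
    linear_combination -hdet
  have hnum : g 0 0 * ((g 1 0 - g 1 1 * y) / (g 0 1 * y - g 0 0)) + g 1 0
      = -y / (g 0 1 * y - g 0 0) := by
    rw [mul_div_assoc', div_add' _ _ _ hy]
    congr 1
    linear_combination -y * hdet
  refine ⟨(g 1 0 - g 1 1 * y) / (g 0 1 * y - g 0 0), by simp [hden, hy], ?_⟩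
  rw [mobius, hden, hnum, div_neg, neg_div, neg_div, neg_neg, div_inv_eq_mul, div_mul_cancel₀ _ hy]

theorem ae_mem_image_mobius : ∀ᵐ y : ℝ, y ∈ g.mobius '' {x | g.mobiusDenom x ≠ 0} := by
  refine (ae_mul_add_ne_zero (not_and_or.mp fun h => ?_)).mono fun y hy =>
    g.mem_image_mobius (by rwa [sub_eq_add_neg])
  simpa [h.1, neg_eq_zero.mp h.2] using g.det_fin_two_eq_one

end Matrix.SpecialLinearGroup

open Matrix.SpecialLinearGroup

def complementaryIntegrandR (σ : ℝ) (f₁ f₂ : ℝ → ℂ) (p : ℝ × ℝ) : ℂ :=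
  f₁ p.1 * (starRingEnd ℂ) (f₂ p.2) * (((|p.1 - p.2| : ℝ) ^ (-(1 - σ)) : ℝ) : ℂ)

theorem complementarySeriesR_apply (σ : ℝ) (g : Matrix.SpecialLinearGroup (Fin 2) ℝ)
    (f : ℝ → ℂ) (x : ℝ) :
    complementarySeriesR σ g f x = ((|g.mobiusDenom x| ^ (-1 - σ) : ℝ) : ℂ) * f (g.mobius x) :=
  rfl

theorem complementaryIntegrandR_complementarySeriesR (σ : ℝ)
    (g : Matrix.SpecialLinearGroup (Fin 2) ℝ) (f : ℝ → ℂ) {x y : ℝ}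
    (hx : g.mobiusDenom x ≠ 0) (hy : g.mobiusDenom y ≠ 0) :
    complementaryIntegrandR σ (complementarySeriesR σ g f) (complementarySeriesR σ g f) (x, y) =
      |(g.mobiusDenom x ^ 2)⁻¹ * (g.mobiusDenom y ^ 2)⁻¹| •
        complementaryIntegrandR σ f f (g.mobius x, g.mobius y) := by
  have hkernel : |(g.mobiusDenom x ^ 2)⁻¹ * (g.mobiusDenom y ^ 2)⁻¹| *
        |g.mobius x - g.mobius y| ^ (-(1 - σ)) =
      |g.mobiusDenom x| ^ (-1 - σ) * |g.mobiusDenom y| ^ (-1 - σ) * |x - y| ^ (-(1 - σ)) := by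
    rw [g.mobius_sub_mobius hx hy, abs_div_rpow_neg, abs_mul, abs_mul,
      Real.mul_rpow (abs_nonneg _) (abs_nonneg _), ← abs_inv_sq_mul_rpow hx,
      ← abs_inv_sq_mul_rpow hy]
    ring
  have hkernelC := congrArg ((↑) : ℝ → ℂ) hkernel
  push_cast at hkernelC
  simp only [complementaryIntegrandR, complementarySeriesR_apply, map_mul, Complex.conj_ofReal,
    Complex.real_smul]
  linear_combination (-(f (g.mobius x) * starRingEnd ℂ (f (g.mobius y)))) * hkernelC

theorem complementarySeriesR_unitary_general (σ : ℝ)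
    (g : Matrix.SpecialLinearGroup (Fin 2) ℝ) (f : ℝ → ℂ) :
    complementaryFormR σ (complementarySeriesR σ g f) (complementarySeriesR σ g f)
      = complementaryFormR σ f f := by
  set s := {x | g.mobiusDenom x ≠ 0}
  have hs : MeasurableSet s :=
    (isOpen_ne_fun g.continuous_mobiusDenom continuous_const).measurableSet
  calc complementaryFormR σ (complementarySeriesR σ g f) (complementarySeriesR σ g f)
      = ∫ p in s ×ˢ s,
          complementaryIntegrandR σ (complementarySeriesR σ g f) (complementarySeriesR σ g f) p :=
        (setIntegral_prod_eq_integral_of_ae_mem g.ae_mobiusDenom_ne_zero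
          g.ae_mobiusDenom_ne_zero _).symm
    _ = ∫ p in s ×ˢ s, |(g.mobiusDenom p.1 ^ 2)⁻¹ * (g.mobiusDenom p.2 ^ 2)⁻¹| •
          complementaryIntegrandR σ f f (g.mobius p.1, g.mobius p.2) :=
        setIntegral_congr_fun (hs.prod hs) fun p hp =>
          complementaryIntegrandR_complementarySeriesR σ g f hp.1 hp.2
    _ = ∫ p in (g.mobius '' s) ×ˢ (g.mobius '' s), complementaryIntegrandR σ f f p :=
        (integral_image_prod_image_eq_integral_abs_deriv_mul_smul hs
          (fun x hx => (g.hasDerivAt_mobius hx).hasDerivWithinAt) g.injOn_mobius _).symm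
    _ = complementaryFormR σ f f :=
        setIntegral_prod_eq_integral_of_ae_mem g.ae_mem_image_mobius g.ae_mem_image_mobius _

/-- For `0 < σ < 1`, `g ∈ SL(2,ℝ)`, and every continuous compactly supported `f : ℝ → ℂ`,
`B(T^σ(g)f, T^σ(g)f) = B(f,f)`: unitarity of the complementary series of `SL(2,ℝ)`. -/
theorem complementarySeriesR_unitary (σ : ℝ) (hσ₀ : 0 < σ) (hσ₁ : σ < 1)
    (g : Matrix.SpecialLinearGroup (Fin 2) ℝ) (f : ℝ → ℂ)
    (hf : Continuous f) (hsupp : HasCompactSupport f) :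
    complementaryFormR σ (complementarySeriesR σ g f) (complementarySeriesR σ g f)
      = complementaryFormR σ f f :=
  complementarySeriesR_unitary_general σ g f
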